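/- Let a>0, b>0 and α∈(1,2). For every ε₀ ∈ (0, π/2), every x>0 and every t>0, lim_{K→∞} ∫_{π/2+ε₀}^{π} i K e^{iθ} · e^{x K e^{iθ}} · exp( −a ∫₀^t v_s(K e^{iθ}) ds ) dθ = 0, i.e., the contour integral of z ↦ e^{xz} exp(−a ∫₀^t v_s(z) ds) over the circular arc { K e^{iθ} : θ ∈ [π/2+ε₀, π] } tends to 0 as K → ∞. -/

import Mathlib

open Real Filter

/-- The complex extension of the function `v_s(z)`, defined via principal-branch
complex powers (with the convention `0 ^ β = 0`). -/
noncomputable def vC (b α : ℝ) (s : ℝ) (z : ℂ) : ℂ :=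
  ((1 / ((α : ℂ) * (b : ℂ)) + z ^ ((1 : ℂ) - (α : ℂ))) * Complex.exp ((b * (α - 1) * s : ℝ) : ℂ)
      - 1 / ((α : ℂ) * (b : ℂ))) ^ ((1 : ℂ) / (1 - (α : ℂ)))

/-!
On the arc `z = K e^{iθ}` we have `|e^{xz}| = e^{xK cos θ} ≤ e^{-xK sin ε₀}`, so it suffices that
`∫₀ᵗ v_s(z) ds = o(K)` uniformly in `θ`. Write `v_s(z) = w_s(z)^{-1/(α-1)}` with
`w_s(z) = vCBase b α s z`. The imaginary part of `w_s(z)` is `-K^{1-α} sin((α-1)θ) e^{b(α-1)s}`, and `(α-1)θ` stays in a compact subset of `(0, π)`: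
this keeps `w_s(z)` off the branch cut and gives `|v_s(z)| ≤ m^{-1/(α-1)} K`, where
`m > 0` bounds `sin((α-1)θ)` from below on the arc. The real part of
`w_s(z)` is at least `(α-1)s/α - K^{1-α} e^{b(α-1)t}`, so on `[u, t]` the function `v_s(z)` is
bounded independently of `K` once `K` is large. Splitting `[0, t]` at a small `u` gives
`|∫₀ᵗ v_s(z) ds| ≤ ηK` for every `η > 0` and all large `K`.
-/

open MeasureTheory Set

noncomputable def vCBase (b α s : ℝ) (z : ℂ) : ℂ :=
  (1 / ((α : ℂ) * (b : ℂ)) + z ^ ((1 : ℂ) - (α : ℂ))) * Complex.exp ((b * (α - 1) * s : ℝ) : ℂ)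
      - 1 / ((α : ℂ) * (b : ℂ))

lemma vC_eq_vCBase_cpow (b α s : ℝ) (z : ℂ) :
    vC b α s z = vCBase b α s z ^ ((-(α - 1)⁻¹ : ℝ) : ℂ) := by
  rw [vC, vCBase, one_div (1 - (α : ℂ)), ← neg_sub (α : ℂ) 1, inv_neg]
  push_cast
  rfl

lemma vCBase_re (b α s : ℝ) (z : ℂ) :
    (vCBase b α s z).re = (Real.exp (b * (α - 1) * s) - 1) / (α * b)
      + (z ^ ((1 : ℂ) - α)).re * Real.exp (b * (α - 1) * s) := by
  have h : (1 / ((α : ℂ) * (b : ℂ))) = ((1 / (α * b) : ℝ) : ℂ) := by push_cast; ring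
  rw [vCBase, h, ← Complex.ofReal_exp]
  simp only [Complex.sub_re, Complex.mul_re, Complex.add_re, Complex.add_im, Complex.ofReal_re,
    Complex.ofReal_im]
  ring

lemma vCBase_im (b α s : ℝ) (z : ℂ) :
    (vCBase b α s z).im = (z ^ ((1 : ℂ) - α)).im * Real.exp (b * (α - 1) * s) := by
  have h : (1 / ((α : ℂ) * (b : ℂ))) = ((1 / (α * b) : ℝ) : ℂ) := by push_cast; ring
  rw [vCBase, h, ← Complex.ofReal_exp]
  simp only [Complex.sub_im, Complex.mul_im, Complex.add_re, Complex.add_im, Complex.ofReal_re,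
    Complex.ofReal_im]
  ring

lemma norm_vC_le {b α s X : ℝ} {z : ℂ} (hα : 1 ≤ α) (hX : 0 < X) (h : X ≤ ‖vCBase b α s z‖) :
    ‖vC b α s z‖ ≤ X ^ (-(α - 1)⁻¹) := by
  rw [vC_eq_vCBase_cpow, Complex.norm_cpow_real]
  exact Real.rpow_le_rpow_of_nonpos hX h (neg_nonpos.mpr (inv_nonneg.mpr (by linarith)))

lemma mul_rpow_le_abs_cpow_one_sub_im {m α : ℝ} {z : ℂ}
    (hm : m ≤ Real.sin ((α - 1) * Complex.arg z)) :
    m * ‖z‖ ^ (1 - α) ≤ |(z ^ ((1 : ℂ) - α)).im| := by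
  have h : (1 : ℂ) - α = ((1 - α : ℝ) : ℂ) := by push_cast; rfl
  rw [h, Complex.cpow_ofReal_im, abs_mul, abs_of_nonneg (by positivity),
    show Complex.arg z * (1 - α) = -((α - 1) * Complex.arg z) by ring, Real.sin_neg, abs_neg,
    mul_comm]
  exact mul_le_mul_of_nonneg_left (hm.trans (le_abs_self _)) (by positivity)

lemma mul_rpow_le_norm_vCBase {b α s m : ℝ} {z : ℂ} (hb : 0 ≤ b) (hα : 1 ≤ α) (hs : 0 ≤ s)
    (hm : m ≤ Real.sin ((α - 1) * Complex.arg z)) :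
    m * ‖z‖ ^ (1 - α) ≤ ‖vCBase b α s z‖ := by
  have hα₁ : 0 ≤ α - 1 := sub_nonneg.2 hα
  have hE : 1 ≤ Real.exp (b * (α - 1) * s) := Real.one_le_exp (by positivity)
  calc m * ‖z‖ ^ (1 - α) ≤ |(z ^ ((1 : ℂ) - α)).im| := mul_rpow_le_abs_cpow_one_sub_im hm
    _ ≤ |(z ^ ((1 : ℂ) - α)).im| * Real.exp (b * (α - 1) * s) :=
        le_mul_of_one_le_right (abs_nonneg _) hE
    _ = |(vCBase b α s z).im| := by rw [vCBase_im, abs_mul, abs_of_pos (Real.exp_pos _)]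
    _ ≤ ‖vCBase b α s z‖ := Complex.abs_im_le_norm _

lemma sub_le_norm_vCBase {b α s t : ℝ} (z : ℂ) (hb : 0 < b) (hα : 1 ≤ α) (hst : s ≤ t) :
    (α - 1) / α * s - ‖z‖ ^ (1 - α) * Real.exp (b * (α - 1) * t) ≤ ‖vCBase b α s z‖ := by
  have hα0 : 0 < α := by linarith
  have hE : b * (α - 1) * s + 1 ≤ Real.exp (b * (α - 1) * s) := Real.add_one_le_exp _
  have hEt : Real.exp (b * (α - 1) * s) ≤ Real.exp (b * (α - 1) * t) :=
    Real.exp_le_exp.2 (mul_le_mul_of_nonneg_left hst (mul_nonneg hb.le (sub_nonneg.2 hα)))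
  have hdrift : (α - 1) / α * s ≤ (Real.exp (b * (α - 1) * s) - 1) / (α * b) := by
    rw [le_div_iff₀ (by positivity)]
    calc (α - 1) / α * s * (α * b) = b * (α - 1) * s := by field_simp
      _ ≤ _ := by linarith
  have hpow : -‖z‖ ^ (1 - α) ≤ (z ^ ((1 : ℂ) - α)).re := by
    have h : (1 : ℂ) - α = ((1 - α : ℝ) : ℂ) := by push_cast; rfl
    rw [← Complex.norm_cpow_real, ← h]
    exact neg_le_of_abs_le (Complex.abs_re_le_norm _)
  calc (α - 1) / α * s - ‖z‖ ^ (1 - α) * Real.exp (b * (α - 1) * t)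
      ≤ (Real.exp (b * (α - 1) * s) - 1) / (α * b)
          + (z ^ ((1 : ℂ) - α)).re * Real.exp (b * (α - 1) * s) := by
        nlinarith [Real.exp_pos (b * (α - 1) * s), Real.rpow_nonneg (norm_nonneg z) (1 - α)]
    _ = (vCBase b α s z).re := (vCBase_re b α s z).symm
    _ ≤ ‖vCBase b α s z‖ := Complex.re_le_norm _

lemma continuous_vC {b α : ℝ} {z : ℂ} (hz : (z ^ ((1 : ℂ) - α)).im ≠ 0) :
    Continuous fun s => vC b α s z := by
  have hbase : Continuous fun s => vCBase b α s z := by unfold vCBase; fun_prop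
  simp only [vC_eq_vCBase_cpow]
  refine continuous_iff_continuousAt.2 fun s =>
    (continuousAt_cpow_const (Complex.mem_slitPlane_iff.2 (Or.inr ?_))).comp hbase.continuousAt
  rw [vCBase_im]
  exact mul_ne_zero hz (Real.exp_pos _).ne'

lemma norm_integral_le_of_norm_le_const_split {E : Type*} [NormedAddCommGroup E]
    [NormedSpace ℝ E] {f : ℝ → E} {u t A B : ℝ} (hu : 0 ≤ u) (hut : u ≤ t)
    (hf₁ : IntervalIntegrable f volume 0 u) (hf₂ : IntervalIntegrable f volume u t)
    (hA : ∀ s ∈ Ioc 0 u, ‖f s‖ ≤ A) (hB : ∀ s ∈ Ioc u t, ‖f s‖ ≤ B) :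
    ‖∫ s in 0..t, f s‖ ≤ A * u + B * (t - u) := by
  rw [← intervalIntegral.integral_add_adjacent_intervals hf₁ hf₂]
  have h₁ := intervalIntegral.norm_integral_le_of_norm_le_const (by rwa [uIoc_of_le hu])
  have h₂ := intervalIntegral.norm_integral_le_of_norm_le_const (by rwa [uIoc_of_le hut])
  rw [sub_zero, abs_of_nonneg hu] at h₁
  rw [abs_of_nonneg (sub_nonneg.2 hut)] at h₂
  exact (norm_add_le _ _).trans (add_le_add h₁ h₂)

lemma norm_integral_vC_le {b α t m u : ℝ} {z : ℂ} (hb : 0 < b) (hα : 1 < α) (hm : 0 < m)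
    (hmz : m ≤ Real.sin ((α - 1) * Complex.arg z)) (hu : 0 < u) (hut : u ≤ t)
    (hsmall : ‖z‖ ^ (1 - α) * Real.exp (b * (α - 1) * t) ≤ (α - 1) / α * u / 2) :
    ‖∫ s in 0..t, vC b α s z‖
      ≤ m ^ (-(α - 1)⁻¹) * ‖z‖ * u + ((α - 1) / α * u / 2) ^ (-(α - 1)⁻¹) * (t - u) := by
  have hz : 0 < ‖z‖ := by
    refine norm_pos_iff.2 fun h => ?_
    rw [h, Complex.arg_zero, mul_zero, Real.sin_zero] at hmz
    linarith
  have hα₁ : 0 < α - 1 := by linarith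
  have hc : 0 < (α - 1) / α * u / 2 := by positivity
  have him : (z ^ ((1 : ℂ) - α)).im ≠ 0 := by
    refine abs_pos.1 ((mul_rpow_le_abs_cpow_one_sub_im hmz).trans_lt' ?_)
    positivity
  have hpow : (m * ‖z‖ ^ (1 - α)) ^ (-(α - 1)⁻¹) = m ^ (-(α - 1)⁻¹) * ‖z‖ := by
    rw [Real.mul_rpow hm.le (by positivity), ← Real.rpow_mul hz.le,
      show (1 - α) * -(α - 1)⁻¹ = 1 by field_simp; ring, Real.rpow_one]
  have hcont := continuous_vC (b := b) him
  refine norm_integral_le_of_norm_le_const_split hu.le hut (hcont.intervalIntegrable _ _)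
    (hcont.intervalIntegrable _ _) ?_ ?_
  · intro s hs
    rw [← hpow]
    exact norm_vC_le hα.le (by positivity) (mul_rpow_le_norm_vCBase hb.le hα.le hs.1.le hmz)
  · intro s hs
    refine norm_vC_le hα.le hc ((?_ : _ ≤ _).trans (sub_le_norm_vCBase z hb hα.le hs.2))
    have : (α - 1) / α * u ≤ (α - 1) / α * s :=
      mul_le_mul_of_nonneg_left hs.1.le (by positivity)
    linarith

lemma eventually_norm_integral_vC_le {b α t m η : ℝ} (hb : 0 < b) (hα : 1 < α) (ht : 0 < t)
    (hm : 0 < m) (hη : 0 < η) :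
    ∀ᶠ K in atTop, ∀ z : ℂ, ‖z‖ = K → m ≤ Real.sin ((α - 1) * Complex.arg z) →
      ‖∫ s in 0..t, vC b α s z‖ ≤ η * K := by
  have hα₁ : 0 < α - 1 := by linarith
  set C := m ^ (-(α - 1)⁻¹)
  have hC : 0 < C := by positivity
  -- on `[0, u]` the bound `|v_s(z)| ≤ C‖z‖` then costs at most `η‖z‖/2`
  set u := min t (η / (2 * C))
  have hu : 0 < u := lt_min ht (by positivity)
  set c := (α - 1) / α * u / 2
  have hc : 0 < c := by positivity
  set B := c ^ (-(α - 1)⁻¹)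
  have hsmall : ∀ᶠ K : ℝ in atTop, K ^ (1 - α) * Real.exp (b * (α - 1) * t) < c := by
    have h := (tendsto_rpow_neg_atTop hα₁).mul_const (Real.exp (b * (α - 1) * t))
    rw [zero_mul, neg_sub] at h
    exact h.eventually_lt_const hc
  have hlarge : ∀ᶠ K : ℝ in atTop, B * t ≤ η / 2 * K :=
    (tendsto_id.const_mul_atTop (by positivity)).eventually_ge_atTop (B * t)
  filter_upwards [hsmall, hlarge] with K hK₁ hK₂ z hzK hmz
  subst hzK
  refine (norm_integral_vC_le hb hα hm hmz hu (min_le_left _ _) hK₁.le).trans ?_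
  have h₁ : C * ‖z‖ * u ≤ η / 2 * ‖z‖ :=
    calc C * ‖z‖ * u ≤ C * ‖z‖ * (η / (2 * C)) :=
          mul_le_mul_of_nonneg_left (min_le_right _ _) (by positivity)
      _ = η / 2 * ‖z‖ := by field_simp
  have h₂ : B * (t - u) ≤ B * t := mul_le_mul_of_nonneg_left (by linarith) (by positivity)
  linarith

lemma norm_ofReal_mul_exp_mul_I {K : ℝ} (hK : 0 ≤ K) (θ : ℝ) :
    ‖(K : ℂ) * Complex.exp ((θ : ℂ) * Complex.I)‖ = K := by
  rw [norm_mul, Complex.norm_exp_ofReal_mul_I, mul_one, Complex.norm_real, Real.norm_of_nonneg hK]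

lemma arg_ofReal_mul_exp_mul_I {K θ : ℝ} (hK : 0 < K) (hθ : θ ∈ Ioc (-π) π) :
    Complex.arg ((K : ℂ) * Complex.exp ((θ : ℂ) * Complex.I)) = θ := by
  rw [Complex.arg_real_mul _ hK, Complex.arg_exp_mul_I, toIocMod_eq_self]
  rwa [show -π + 2 * π = π by ring]

lemma exists_pos_forall_le_sin_mul {α θ₀ : ℝ} (hα : 1 < α) (hα2 : α < 2) (hθ₀ : 0 < θ₀)
    (hθ₀π : θ₀ ≤ π) : ∃ m > 0, ∀ θ ∈ Icc θ₀ π, m ≤ Real.sin ((α - 1) * θ) := by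
  have hπ := Real.pi_pos
  refine ⟨min (Real.sin ((α - 1) * θ₀)) (Real.sin ((α - 1) * π)), ?_, fun θ hθ => ?_⟩
  · refine lt_min (Real.sin_pos_of_pos_of_lt_pi ?_ ?_) (Real.sin_pos_of_pos_of_lt_pi ?_ ?_) <;>
      nlinarith
  · exact strictConcaveOn_sin_Icc.concaveOn.min_le_of_mem_Icc ⟨by nlinarith, by nlinarith⟩
      ⟨by nlinarith, by nlinarith⟩ ⟨by nlinarith [hθ.1], by nlinarith [hθ.2]⟩

lemma norm_arc_integrand_le {a x c K θ : ℝ} {J : ℂ} (ha : 0 < a) (hK : 0 ≤ K)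
    (hcos : x * Real.cos θ ≤ -(2 * c)) (hJ : ‖J‖ ≤ c / a * K) :
    ‖Complex.I * (K : ℂ) * Complex.exp ((θ : ℂ) * Complex.I) *
        Complex.exp ((x : ℂ) * ((K : ℂ) * Complex.exp ((θ : ℂ) * Complex.I))) *
        Complex.exp (-(a : ℂ) * J)‖ ≤ K * Real.exp (-c * K) := by
  rw [mul_assoc Complex.I, norm_mul, norm_mul, norm_mul, Complex.norm_I, one_mul,
    norm_ofReal_mul_exp_mul_I hK, Complex.norm_exp, Complex.norm_exp, mul_assoc, ← Real.exp_add]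
  gcongr
  have hre : ((x : ℂ) * ((K : ℂ) * Complex.exp ((θ : ℂ) * Complex.I))).re = x * Real.cos θ * K := by
    simp [Complex.mul_re, Complex.exp_ofReal_mul_I_re, Complex.exp_ofReal_mul_I_im]
    ring
  have hJre : (-(a : ℂ) * J).re ≤ c * K :=
    calc (-(a : ℂ) * J).re = a * -J.re := by simp [Complex.mul_re]
      _ ≤ a * (c / a * K) :=
        mul_le_mul_of_nonneg_left ((neg_le_abs _).trans ((Complex.abs_re_le_norm J).trans hJ)) ha.le
      _ = c * K := by field_simp
  rw [hre]
  nlinarith [mul_le_mul_of_nonneg_right hcos hK]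

theorem stmt_11 (a b α : ℝ) (ha : 0 < a) (hb : 0 < b) (hα : 1 < α) (hα2 : α < 2) :
    ∀ ε₀ : ℝ, 0 < ε₀ → ε₀ < π / 2 →
      ∀ x t : ℝ, 0 < x → 0 < t →
        Tendsto (fun K : ℝ =>
            ∫ θ in (π / 2 + ε₀)..π,
              Complex.I * (K : ℂ) * Complex.exp ((θ : ℂ) * Complex.I) *
                Complex.exp ((x : ℂ) * ((K : ℂ) * Complex.exp ((θ : ℂ) * Complex.I))) *
                Complex.exp (-(a : ℂ) *
                  ∫ s in (0:ℝ)..t, vC b α s ((K : ℂ) * Complex.exp ((θ : ℂ) * Complex.I))))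
          atTop (nhds 0) := by
  intro ε₀ hε₀ hε₀' x t hx ht
  obtain ⟨m, hm, hm_le⟩ :=
    exists_pos_forall_le_sin_mul (θ₀ := π / 2 + ε₀) hα hα2 (by positivity) (by linarith)
  set c := x * Real.sin ε₀ / 2 with hc_def
  have hc : 0 < c := by
    have := Real.sin_pos_of_pos_of_lt_pi hε₀ (by linarith [Real.pi_pos])
    positivity
  refine squeeze_zero_norm' (a := fun K => K * Real.exp (-c * K) * π) ?_
    (by simpa using (tendsto_rpow_mul_exp_neg_mul_atTop_nhds_zero 1 c hc).mul_const π)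
  filter_upwards [eventually_norm_integral_vC_le hb hα ht hm (div_pos hc ha),
    eventually_gt_atTop 0] with K hJ hK
  refine (intervalIntegral.norm_integral_le_of_norm_le_const (C := K * Real.exp (-c * K))
    fun θ hθ => ?_).trans ?_
  · rw [uIoc_of_le (by linarith)] at hθ
    have hcos : Real.cos θ ≤ -Real.sin ε₀ := by
      rw [← Real.cos_add_pi_div_two, add_comm]
      exact Real.cos_le_cos_of_nonneg_of_le_pi (by positivity) hθ.2 hθ.1.le
    refine norm_arc_integrand_le ha hK.le (by rw [hc_def]; nlinarith)
      (hJ _ (norm_ofReal_mul_exp_mul_I hK.le θ) ?_)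
    rw [arg_ofReal_mul_exp_mul_I hK ⟨by linarith [hθ.1, Real.pi_pos], hθ.2⟩]
    exact hm_le θ (Ioc_subset_Icc_self hθ)
  · rw [abs_of_nonneg (by linarith)]
    gcongr
    linarith
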